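/- arXiv:2312.08686 — 2 statements merged into one kernel-verified Lean document; each statement's English description precedes it below -/
import Mathlib

section
/- If V = ⟨V_a⟩ is a Lusin π-base for a topological space (X,τ) and p ∈ ω^ω, then p →_{V,τ} x for every x ∈ fruit_p(V). -/
open Set Topology

universe u v

/-- The restriction `p↾n` of `p : ℕ → ℕ`, as a finite sequence in `ω^{<ω}`. -/
def pre (p : ℕ → ℕ) (n : ℕ) : List ℕ := List.ofFn fun i : Fin n => p i

/-- `a ⊑ p` : the finite sequence `a` is an initial segment of the branch `p`. -/
def IsPre (a : List ℕ) (p : ℕ → ℕ) : Prop := a = pre p a.length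

/-- `S_a = {p ∈ ω^ω : a ⊑ p}`, the pieces of the standard Lusin scheme. -/
def stdS (a : List ℕ) : Set (ℕ → ℕ) := {p | IsPre a p}

section scheme

variable {X Y : Type*}

/-- `fruit_p(V) = ⋂_n V_{p↾n}`. -/
def fruit (V : List ℕ → Set X) (p : ℕ → ℕ) : Set X := ⋂ n, V (pre p n)

/-- `flesh(V) = ⋃_a V_a`. -/
def flesh (V : List ℕ → Set X) : Set X := ⋃ a, V a

/-- The Souslin scheme `V` covers the set `A`. -/
def Covers (V : List ℕ → Set X) (A : Set X) : Prop :=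
  V [] = A ∧ ∀ a, V a = ⋃ n, V (a ++ [n])

/-- The Souslin scheme `V` partitions the set `A`. -/
def Partitions (V : List ℕ → Set X) (A : Set X) : Prop :=
  Covers V A ∧ ∀ a, ∀ n m : ℕ, n ≠ m → V (a ++ [n]) ∩ V (a ++ [m]) = ∅

/-- `V` is complete: every fruit is nonempty. -/
def CompleteScheme (V : List ℕ → Set X) : Prop := ∀ q : ℕ → ℕ, (fruit V q).Nonempty

/-- `V` has strict branches: every fruit is a singleton. -/
def StrictBranches (V : List ℕ → Set X) : Prop := ∀ q : ℕ → ℕ, ∃ x, fruit V q = {x}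

/-- `V` is regular: `V_{a⌢n} ⊆ V_a`. -/
def RegularScheme (V : List ℕ → Set X) : Prop := ∀ a n, V (a ++ [n]) ⊆ V a

/-- `V` has nonempty leaves. -/
def NonemptyLeaves (V : List ℕ → Set X) : Prop := ∀ a, (V a).Nonempty

/-- `V` is an open Souslin scheme with respect to the topology `t`. -/
def OpenScheme (t : TopologicalSpace X) (V : List ℕ → Set X) : Prop := ∀ a, t.IsOpen (V a)

/-- `V` is semi-open with respect to the topology `t`: `V_a ⊆ Cl_t(Int_t(V_a))`. -/
def SemiOpenScheme (t : TopologicalSpace X) (V : List ℕ → Set X) : Prop :=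
  ∀ a, V a ⊆ @closure _ t (@interior _ t (V a))

/-- `Ṽ^k_b = ⋃_{j ≥ k} V_{b⌢j}`. -/
def shootSet (V : List ℕ → Set X) (b : List ℕ) (k : ℕ) : Set X :=
  ⋃ j, ⋃ (_ : k ≤ j), V (b ++ [j])

/-- `shoot_b(V) = {Ṽ^k_b : k ∈ ω}`. -/
def shoot (V : List ℕ → Set X) (b : List ℕ) : Set (Set X) := {G | ∃ k, G = shootSet V b k}

/-- `γ → U`: some member of the family `γ` is contained in `U`. -/
def Engulfs (γ : Set (Set X)) (U : Set X) : Prop := ∃ G ∈ γ, G ⊆ U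

/-- `p →_V U`: there is an infinite `L ⊆ ω` with `shoot_{p↾n}(V) → U` for all `n ∈ L`. -/
def ArrowSeq (V : List ℕ → Set X) (p : ℕ → ℕ) (U : Set X) : Prop :=
  ∃ L : Set ℕ, L.Infinite ∧ ∀ n ∈ L, Engulfs (shoot V (pre p n)) U

/-- `p →_{V,t} x`: `p →_V U` for every `t`-open `U` containing `x`. -/
def ArrowPt (t : TopologicalSpace X) (V : List ℕ → Set X) (p : ℕ → ℕ) (x : X) : Prop :=
  ∀ U : Set X, t.IsOpen U → x ∈ U → ArrowSeq V p U

/-- `V` is a Lusin π-base for `(X, t)`. -/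
def LusinPiBase (t : TopologicalSpace X) (V : List ℕ → Set X) : Prop :=
  OpenScheme t V ∧ Partitions V Set.univ ∧ StrictBranches V ∧
    ∀ x : X, ∀ U : Set X, t.IsOpen U → x ∈ U →
      ∃ a : List ℕ, ∃ n : ℕ, x ∈ V a ∧ shootSet V a n ⊆ U

/-- `V` is an α-scheme for `(X, t)`. -/
def AlphaScheme (t : TopologicalSpace X) (V : List ℕ → Set X) : Prop :=
  OpenScheme t V ∧ CompleteScheme V ∧ Covers V Set.univ ∧
    (∀ a : List ℕ, ∀ x ∈ V a, ∃ p : ℕ → ℕ, IsPre a p ∧ x ∈ fruit V p ∧ ArrowPt t V p x) ∧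
    (∀ p : ℕ → ℕ, ∃ x ∈ fruit V p, ArrowPt t V p x)

/-- `V` is a ramose α-scheme for `(X, t)`. -/
def RamoseAlphaScheme (t : TopologicalSpace X) (V : List ℕ → Set X) : Prop :=
  AlphaScheme t V ∧ ∀ a : List ℕ, ∀ x ∈ V a,
    Cardinal.mk {p : ℕ → ℕ // IsPre a p ∧ x ∈ fruit V p ∧ ArrowPt t V p x} = Cardinal.continuum

/-- `γ` is a π-base for `(X, t)`. -/
def PiBase (t : TopologicalSpace X) (γ : Set (Set X)) : Prop :=
  (∀ G ∈ γ, G.Nonempty ∧ t.IsOpen G) ∧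
    ∀ U : Set X, t.IsOpen U → U.Nonempty → ∃ G ∈ γ, G ⊆ U

/-- `γ` is a π-net for the subspace `A` of `(X, t)`. -/
def PiNetFor (t : TopologicalSpace X) (γ : Set (Set X)) (A : Set X) : Prop :=
  (∀ G ∈ γ, G.Nonempty) ∧
    ∀ U : Set X, t.IsOpen U → (U ∩ A).Nonempty → ∃ G ∈ γ, G ⊆ U ∩ A

/-- `V` is a π-base Souslin scheme on `(X, t)`:
an open scheme such that `{V_b : a ⊑ b}` is a π-net for the subspace `V_a`, for each `a`. -/
def PiBaseScheme (t : TopologicalSpace X) (V : List ℕ → Set X) : Prop :=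
  OpenScheme t V ∧ ∀ a, PiNetFor t {S | ∃ b, a <+: b ∧ S = V b} (V a)

/-- `(X, t)` is a π-space. -/
def PiSpace (t : TopologicalSpace X) : Prop :=
  ∃ V : List ℕ → Set X, OpenScheme t V ∧ Partitions V Set.univ ∧ StrictBranches V ∧
    PiBase t {S | ∃ a, S = V a}

/-- `(X, t)` is zero-dimensional: it has a base consisting of clopen sets. -/
def ZeroDimT (t : TopologicalSpace X) : Prop :=
  ∀ U : Set X, t.IsOpen U → ∀ x ∈ U, ∃ C : Set X, t.IsOpen C ∧ @IsClosed _ t C ∧ x ∈ C ∧ C ⊆ U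

/-- `branches_V(x) = {q ∈ ω^ω : x ∈ fruit_q(V)}`. -/
def branches (V : List ℕ → Set X) (x : X) : Set (ℕ → ℕ) := {q | x ∈ fruit V q}

/-- `f` is a selector on `V`: a surjection of `ω^ω` onto `flesh(V)` such that each fiber
`f⁻¹(x)` is a dense subset of the subspace `branches_V(x)` of the Baire space. -/
def IsSelector (V : List ℕ → Set X) (f : (ℕ → ℕ) → X) : Prop :=
  (∀ p, f p ∈ flesh V) ∧ (∀ x ∈ flesh V, ∃ p, f p = x) ∧
    ∀ x ∈ flesh V, f ⁻¹' {x} ⊆ branches V x ∧ branches V x ⊆ closure (f ⁻¹' {x})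

/-- The topology `σ_{t,f}` on `ω^ω` generated by the subbase
`{f⁻¹[U] : U ∈ t} ∪ {S_a : a ∈ ω^{<ω}}`. -/
def sigmaTop (t : TopologicalSpace X) (f : (ℕ → ℕ) → X) : TopologicalSpace (ℕ → ℕ) :=
  TopologicalSpace.generateFrom
    ({S | ∃ U : Set X, t.IsOpen U ∧ S = f ⁻¹' U} ∪ {S | ∃ a : List ℕ, S = stdS a})

end scheme

/-- `(ω^ω, t)` is a standard π-space: the family `τ_N \ {∅}` of nonempty open sets of the
Baire space is a π-base for `(ω^ω, t)`. -/
def StandardPiSpace (t : TopologicalSpace (ℕ → ℕ)) : Prop :=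
  (∀ U : Set (ℕ → ℕ), IsOpen U → U.Nonempty → t.IsOpen U) ∧
    ∀ U : Set (ℕ → ℕ), t.IsOpen U → U.Nonempty → ∃ G : Set (ℕ → ℕ), IsOpen G ∧ G.Nonempty ∧ G ⊆ U


section aux
variable {X : Type*}

lemma pre_length (p : ℕ → ℕ) (n : ℕ) : (pre p n).length = n := by simp [pre]

lemma pre_succ (p : ℕ → ℕ) (n : ℕ) : pre p (n + 1) = pre p n ++ [p n] := by
  simp only [pre]
  rw [List.ofFn_succ']
  simp [List.concat_eq_append]

lemma regular_of_covers {V : List ℕ → Set X} {A : Set X} (h : Covers V A) :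
    RegularScheme V := by
  intro a n
  rw [h.2 a]
  exact Set.subset_iUnion (fun m => V (a ++ [m])) n

lemma pre_extend (a : List ℕ) : pre (fun i => a.getD i 0) a.length = a := by
  apply List.ext_getElem
  · simp [pre]
  · intro i h1 h2
    simp [pre, List.getD_eq_getElem]

lemma nonempty_of_strict {V : List ℕ → Set X} (hs : StrictBranches V) (a : List ℕ) :
    (V a).Nonempty := by
  obtain ⟨x, hx⟩ := hs (fun i => a.getD i 0)
  refine ⟨x, ?_⟩
  have : x ∈ fruit V (fun i => a.getD i 0) := by rw [hx]; rfl
  have := Set.mem_iInter.1 this a.length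
  rwa [pre_extend] at this

lemma uniq_of_partition {V : List ℕ → Set X} (hp : Partitions V Set.univ) {x : X} :
    ∀ n (a b : List ℕ), a.length = n → b.length = n → x ∈ V a → x ∈ V b → a = b := by
  intro n
  induction n with
  | zero => intro a b ha hb _ _
            rw [List.length_eq_zero_iff.1 ha, List.length_eq_zero_iff.1 hb]
  | succ n ih =>
    intro a b ha hb hxa hxb
    rcases List.eq_nil_or_concat a with rfl | ⟨a', m, rfl⟩
    · simp at ha
    rcases List.eq_nil_or_concat b with rfl | ⟨b', k, rfl⟩
    · simp at hb
    simp only [List.concat_eq_append] at ha hb hxa hxb ⊢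
    have hreg := regular_of_covers hp.1
    have ha' : a'.length = n := by simpa using ha
    have hb' : b'.length = n := by simpa using hb
    have heq : a' = b' := ih a' b' ha' hb' (hreg _ _ hxa) (hreg _ _ hxb)
    subst heq
    by_cases hmk : m = k
    · rw [hmk]
    · have hd := hp.2 a' m k hmk
      have hmem : x ∈ V (a' ++ [m]) ∩ V (a' ++ [k]) := ⟨hxa, hxb⟩
      rw [hd] at hmem
      exact absurd hmem (Set.notMem_empty x)

lemma pre_mono {V : List ℕ → Set X} (hreg : RegularScheme V) (p : ℕ → ℕ) {k m : ℕ}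
    (h : k ≤ m) : V (pre p m) ⊆ V (pre p k) := by
  induction m, h using Nat.le_induction with
  | base => exact subset_rfl
  | succ m hm ih => intro y hy
                    rw [pre_succ] at hy
                    exact ih (hreg _ _ hy)

end aux

/-- If `V` is a Lusin π-base for `(X,τ)` and `p ∈ ω^ω`, then `p →_{V,τ} x`
for every `x ∈ fruit_p(V)`. -/
theorem statement2 {X : Type*} [tX : TopologicalSpace X] (V : List ℕ → Set X)
    (hV : LusinPiBase tX V) (p : ℕ → ℕ) :
    ∀ x ∈ fruit V p, ArrowPt tX V p x := by
  obtain ⟨hopen, hpart, hstrict, hL6⟩ := hV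
  have hreg := regular_of_covers hpart.1
  intro x hx U hU hxU
  have key : ∀ m : ℕ, ∃ n, m < n ∧ Engulfs (shoot V (pre p n)) U := by
    intro m
    obtain ⟨a, n, hxa, hsub⟩ := hL6 x (U ∩ V (pre p (m + 1)))
      (IsOpen.inter hU (hopen _)) ⟨hxU, Set.mem_iInter.1 hx (m + 1)⟩
    have ha : a = pre p a.length :=
      uniq_of_partition hpart a.length a (pre p a.length) rfl (pre_length p a.length)
        hxa (Set.mem_iInter.1 hx a.length)
    have hlen : m + 1 ≤ a.length := by
      by_contra hlt
      push_neg at hlt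
      set k := a.length with hk
      set j := max n (p k + 1) with hj
      obtain ⟨y, hy⟩ := nonempty_of_strict hstrict (a ++ [j])
      have hy1 : y ∈ V (pre p (m + 1)) := by
        refine (hsub ?_).2
        exact Set.mem_iUnion.2 ⟨j, Set.mem_iUnion.2 ⟨le_max_left _ _, hy⟩⟩
      have hy2 : y ∈ V (a ++ [p k]) := by
        have : V (pre p (m + 1)) ⊆ V (pre p (k + 1)) := pre_mono hreg p hlt
        have h3 := this hy1
        rwa [pre_succ, ← ha] at h3
      have hjk : j ≠ p k := by
        have : p k + 1 ≤ j := le_max_right _ _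
        omega
      have hd := hpart.2 a j (p k) hjk
      have hmem : y ∈ V (a ++ [j]) ∩ V (a ++ [p k]) := ⟨hy, hy2⟩
      rw [hd] at hmem
      exact absurd hmem (Set.notMem_empty y)
    refine ⟨a.length, hlen, shootSet V (pre p a.length) n, ⟨n, rfl⟩, ?_⟩
    rw [← ha]
    exact hsub.trans Set.inter_subset_left
  choose f hf1 hf2 using key
  refine ⟨{n | Engulfs (shoot V (pre p n)) U}, ?_, fun n hn => hn⟩
  apply Set.infinite_of_not_bddAbove
  rintro ⟨b, hb⟩
  exact absurd (hb (hf2 b)) (by have := hf1 b; omega)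
end

section
/- Let V = ⟨V_a⟩ be a ramose α-scheme for a topological space (X,τ). If the cardinality of X is at most the cardinality of the continuum 𝔠, then there exists a selector f on V such that p →_{V,τ} x for all x ∈ X and all p ∈ f⁻¹(x). -/
open Set Topology

universe u v

open Cardinal in
/-- injective system of distinct representatives -/
lemma exists_injective_choice {ι : Type u} (S : ι → Set (ℕ → ℕ))
    (hι : #ι ≤ Cardinal.continuum.{u}) (hS : ∀ i, #(S i) = Cardinal.continuum.{0}) :
    ∃ F : ι → (ℕ → ℕ), Function.Injective F ∧ ∀ i, F i ∈ S i := by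
  classical
  set κ := Cardinal.continuum.{u} with hκ
  let T := κ.ord.ToType
  have hT : #T = κ := by rw [Cardinal.mk_toType, Cardinal.card_ord]
  obtain ⟨e⟩ : Nonempty (ι ↪ T) := by rw [← Cardinal.le_def, hT]; exact hι
  let S' : T → Set (ℕ → ℕ) := fun j => if h : ∃ i, e i = j then S h.choose else Set.univ
  have hS' : ∀ j, #(S' j) = Cardinal.continuum.{0} := by
    intro j
    by_cases h : ∃ i, e i = j
    · simp only [S', dif_pos h]; exact hS _
    · simp only [S', dif_neg h, Cardinal.mk_univ, Cardinal.mk_arrow, Cardinal.mk_nat,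
        Cardinal.lift_aleph0, Cardinal.aleph0_power_aleph0]
  have hne : ∀ (j : T) (rec : ∀ k, k < j → (ℕ → ℕ)),
      (S' j \ Set.range (fun k : Set.Iio j => rec k k.2)).Nonempty := by
    intro j rec
    by_contra h
    rw [Set.not_nonempty_iff_eq_empty, Set.diff_eq_empty] at h
    have h1 : Cardinal.continuum.{0} ≤ #(Set.range fun k : Set.Iio j => rec k k.2) := by
      rw [← hS' j]; exact Cardinal.mk_le_mk_of_subset h
    have h2 := Cardinal.mk_range_le_lift (f := fun k : Set.Iio j => rec k k.2)
    have h3 := (Cardinal.lift_le.{u}.mpr h1).trans h2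
    rw [Cardinal.lift_continuum, Cardinal.lift_uzero] at h3
    exact absurd (h3.trans_lt (Cardinal.mk_Iio_ord_toType j)) (lt_irrefl _)
  let g : T → (ℕ → ℕ) := IsWellFounded.fix (· < ·) (fun j rec => (hne j rec).some)
  have hg : ∀ j, g j ∈ S' j \ Set.range (fun k : Set.Iio j => g k) := by
    intro j
    have : g j = (hne j (fun k _ => g k)).some := IsWellFounded.fix_eq _ _ _
    rw [this]
    exact (hne j (fun k _ => g k)).some_mem
  have ginj : Function.Injective g := by
    intro j k h
    by_contra hne'
    rcases lt_or_gt_of_ne hne' with hlt | hlt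
    · exact (hg k).2 ⟨⟨j, hlt⟩, h⟩
    · exact (hg j).2 ⟨⟨k, hlt⟩, h.symm⟩
  refine ⟨fun i => g (e i), ginj.comp e.injective, ?_⟩
  intro i
  have h1 := (hg (e i)).1
  have hex : ∃ i', e i' = e i := ⟨i, rfl⟩
  simp only [S', dif_pos hex] at h1
  rwa [e.injective hex.choose_spec] at h1

lemma length_pre (q : ℕ → ℕ) (n : ℕ) : (pre q n).length = n := by
  simp [pre]

lemma isPre_pre_iff {q p : ℕ → ℕ} {n : ℕ} : IsPre (pre q n) p ↔ ∀ i < n, p i = q i := by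
  unfold IsPre
  rw [length_pre]
  unfold pre
  rw [List.ofFn_inj]
  constructor
  · intro h i hi
    exact (congrFun h ⟨i, hi⟩).symm
  · intro h
    funext i
    exact (h i i.2).symm

lemma isPre_nil (p : ℕ → ℕ) : IsPre [] p := rfl

/-- every neighborhood of `q` in Baire space contains a cylinder `stdS (pre q n)` -/
lemma exists_pre_subset_of_nhds {q : ℕ → ℕ} {U : Set (ℕ → ℕ)} (hU : U ∈ nhds q) :
    ∃ n, stdS (pre q n) ⊆ U := by
  obtain ⟨s, ⟨y, n, rfl⟩, hq, hsub⟩ :=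
    (PiNat.isTopologicalBasis_cylinders (fun _ : ℕ => ℕ)).mem_nhds_iff.mp hU
  refine ⟨n, fun p hp => hsub ?_⟩
  intro i hi
  rw [isPre_pre_iff.mp hp i hi]
  exact hq i hi

theorem statement8' {X : Type u} [tX : TopologicalSpace X] (V : List ℕ → Set X)
    (hV : RamoseAlphaScheme tX V) (hcard : Cardinal.mk X ≤ Cardinal.continuum) :
    ∃ f : (ℕ → ℕ) → X, IsSelector V f ∧ ∀ x : X, ∀ p : ℕ → ℕ, f p = x → ArrowPt tX V p x := by
  classical
  obtain ⟨⟨hopen, hcomp, hcov, hS1, hS2⟩, hram⟩ := hV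
  have hflesh : flesh V = Set.univ := by
    apply Set.eq_univ_of_univ_subset
    rw [← hcov.1]
    exact Set.subset_iUnion V []
  let I := {q : X × List ℕ // q.1 ∈ V q.2}
  let S : I → Set (ℕ → ℕ) :=
    fun i => {p | IsPre i.1.2 p ∧ i.1.1 ∈ fruit V p ∧ ArrowPt tX V p i.1.1}
  have hScard : ∀ i, Cardinal.mk (S i) = Cardinal.continuum.{0} := fun i =>
    hram i.1.2 i.1.1 i.2
  have hIcard : Cardinal.mk I ≤ Cardinal.continuum.{u} := by
    calc Cardinal.mk I ≤ Cardinal.mk (X × List ℕ) := Cardinal.mk_subtype_le _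
    _ = Cardinal.lift.{0} (Cardinal.mk X) * Cardinal.lift.{u} (Cardinal.mk (List ℕ)) :=
        Cardinal.mk_prod X (List ℕ)
    _ ≤ Cardinal.continuum * Cardinal.aleph0 := by
        rw [Cardinal.lift_uzero, Cardinal.mk_list_eq_aleph0, Cardinal.lift_aleph0]
        exact mul_le_mul_left hcard _
    _ = Cardinal.continuum := Cardinal.continuum_mul_aleph0
  obtain ⟨F, Finj, hF⟩ := exists_injective_choice S hIcard hScard
  let f : (ℕ → ℕ) → X := fun p =>
    if h : ∃ i : I, F i = p then h.choose.1.1 else (hS2 p).choose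
  have hfB : ∀ i : I, f (F i) = i.1.1 := by
    intro i
    have hex : ∃ i' : I, F i' = F i := ⟨i, rfl⟩
    simp only [f, dif_pos hex]
    rw [Finj hex.choose_spec]
  have hfA : ∀ p, f p ∈ fruit V p ∧ ArrowPt tX V p (f p) := by
    intro p
    by_cases h : ∃ i : I, F i = p
    · obtain ⟨i0, hi0⟩ := h
      have hp : p ∈ S i0 := hi0 ▸ hF i0
      have h' : ∃ i : I, F i = p := ⟨i0, hi0⟩
      have hp : p ∈ S h'.choose := by
        subst hi0; rwa [Finj h'.choose_spec]
      have h := h'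
      simp only [f, dif_pos h]
      exact ⟨hp.2.1, hp.2.2⟩
    · simp only [f, dif_neg h]
      exact ⟨(hS2 p).choose_spec.1, (hS2 p).choose_spec.2⟩
  refine ⟨f, ⟨fun p => hflesh ▸ Set.mem_univ _, fun x _ => ?_, fun x _ => ⟨?_, ?_⟩⟩, ?_⟩
  · -- surjectivity
    have hx : (x, ([] : List ℕ)).1 ∈ V ([] : List ℕ) := by rw [hcov.1]; trivial
    exact ⟨F ⟨(x, []), hx⟩, hfB ⟨(x, []), hx⟩⟩
  · -- fiber ⊆ branches
    intro p hp
    simp only [Set.mem_preimage, Set.mem_singleton_iff] at hp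
    exact hp ▸ (hfA p).1
  · -- branches ⊆ closure fiber
    intro q hq
    rw [mem_closure_iff_nhds]
    intro U hU
    obtain ⟨n, hn⟩ := exists_pre_subset_of_nhds hU
    have hxa : x ∈ V (pre q n) := Set.mem_iInter.mp hq n
    set i : I := ⟨(x, pre q n), hxa⟩
    have hFi : F i ∈ S i := hF i
    refine ⟨F i, hn hFi.1, ?_⟩
    simp only [Set.mem_preimage, Set.mem_singleton_iff]
    exact hfB i
  · intro x p hpx
    exact hpx ▸ (hfA p).2

/-- If `V` is a ramose α-scheme for `(X,τ)` and `|X| ≤ 𝔠`, then there is a selector `f` on `V`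
with `p →_{V,τ} x` for all `x ∈ X` and all `p ∈ f⁻¹(x)`. -/
theorem statement8 {X : Type u} [tX : TopologicalSpace X] (V : List ℕ → Set X)
    (hV : RamoseAlphaScheme tX V) (hcard : Cardinal.mk X ≤ Cardinal.continuum) :
    ∃ f : (ℕ → ℕ) → X, IsSelector V f ∧ ∀ x : X, ∀ p : ℕ → ℕ, f p = x → ArrowPt tX V p x := by
  exact statement8' V hV hcard
end
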